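/- arXiv:1712.03658 — 4 statements merged into one kernel-verified Lean document; each statement's English description precedes it below -/
import Mathlib

section
/- Let A be a 3×3 matrix and K the corresponding Hall tensor with k_{ijk} = Σ_l ε_{ijl} a_{lk}. Then for any orthogonal 3×3 matrix Q, the transformed tensor (⟨Q⟩K)_{ijk} := Σ_{p,q,r} q_{ip} q_{jq} q_{kr} k_{pqr} equals the Hall tensor associated to the matrix det(Q) · Q A Qᵀ. -/
open Matrix

/-- The Levi-Civita symbol on `Fin 3`. -/
noncomputable def lc (i j k : Fin 3) : ℝ :=
  ((((j.val : ℤ) - i.val) * ((k.val : ℤ) - j.val) * ((k.val : ℤ) - i.val)) / 2 : ℤ)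

/-- The Hall tensor `εA` associated to a 3×3 matrix: `k_{ijk} = Σ_l ε_{ijl} a_{lk}`. -/
noncomputable def toHall (A : Matrix (Fin 3) (Fin 3) ℝ) : Fin 3 → Fin 3 → Fin 3 → ℝ :=
  fun i j k => ∑ l, lc i j l * A l k

/-- The matrix `εK` associated to a third order tensor: `(εK)_{ij} = Σ_{k,l} ε_{kli} k_{klj}`. -/
noncomputable def toMat (K : Fin 3 → Fin 3 → Fin 3 → ℝ) : Matrix (Fin 3) (Fin 3) ℝ :=
  Matrix.of fun i j => ∑ k, ∑ l, lc k l i * K k l j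

/-- Orthogonal transformation of a third order tensor. -/
noncomputable def rot (Q : Matrix (Fin 3) (Fin 3) ℝ) (K : Fin 3 → Fin 3 → Fin 3 → ℝ) :
    Fin 3 → Fin 3 → Fin 3 → ℝ :=
  fun i j k => ∑ p, ∑ q, ∑ r, Q i p * Q j q * Q k r * K p q r

/-- Symmetric part of a matrix. -/
noncomputable def symmPart (A : Matrix (Fin 3) (Fin 3) ℝ) : Matrix (Fin 3) (Fin 3) ℝ :=
  (1/2 : ℝ) • (A + Aᵀ)

/-- Skew-symmetric part of a matrix. -/
noncomputable def skewPart (A : Matrix (Fin 3) (Fin 3) ℝ) : Matrix (Fin 3) (Fin 3) ℝ :=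
  (1/2 : ℝ) • (A - Aᵀ)

/-!
The Levi-Civita symbol `ε_{ijk}` is the determinant of rows `i, j, k` of the identity, so
multiplying by `Q` shows `Σ q_{ip} q_{jq} q_{kr} ε_{pqr} = det Q · ε_{ijk}`. When only the first
two slots of `ε` are contracted with `Q`, inserting `QᵀQ = 1` on the free slot reduces to the
three-slot identity and leaves `ε_{ijs} q_{sl}`; the remaining copy of `Q` in the last slot of the
Hall tensor then combines with `A` into `Q A Qᵀ`.
-/

lemma lc_eq_det_submatrix_one (i j k : Fin 3) :
    lc i j k = ((1 : Matrix (Fin 3) (Fin 3) ℝ).submatrix ![i, j, k] id).det := by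
  rw [det_fin_three]
  fin_cases i <;> fin_cases j <;> fin_cases k <;> simp [lc, one_apply]

lemma sum_mul_mul_mul_lc (Q : Matrix (Fin 3) (Fin 3) ℝ) (i j k : Fin 3) :
    ∑ p, ∑ q, ∑ r, Q i p * Q j q * Q k r * lc p q r = Q.det * lc i j k := by
  calc ∑ p, ∑ q, ∑ r, Q i p * Q j q * Q k r * lc p q r
      = (Q.submatrix ![i, j, k] id).det := by
        rw [det_fin_three]
        norm_num [Fin.sum_univ_three, lc, cons_val_two]
        ring
    _ = ((1 : Matrix (Fin 3) (Fin 3) ℝ).submatrix ![i, j, k] id * Q).det :=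
        congrArg det (one_submatrix_mul _ (Equiv.refl _) Q).symm
    _ = Q.det * lc i j k := by rw [det_mul, lc_eq_det_submatrix_one, mul_comm]

lemma sum_smul_lc_vecMul_transpose (Q : Matrix (Fin 3) (Fin 3) ℝ) (i j : Fin 3) :
    (∑ p, ∑ q, (Q i p * Q j q) • lc p q) ᵥ* Qᵀ = Q.det • lc i j := by
  ext k
  simp only [vecMul_transpose, Finset.sum_apply, Pi.smul_apply, smul_eq_mul, mulVec, dotProduct,
    Finset.mul_sum]
  rw [← sum_mul_mul_mul_lc, Finset.sum_comm]
  refine Finset.sum_congr rfl fun p _ => ?_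
  rw [Finset.sum_comm]
  exact Finset.sum_congr rfl fun q _ => Finset.sum_congr rfl fun r _ => by ring

lemma sum_smul_lc_eq_det_smul_vecMul (Q : Matrix (Fin 3) (Fin 3) ℝ) (hQ : Qᵀ * Q = 1)
    (i j : Fin 3) :
    ∑ p, ∑ q, (Q i p * Q j q) • lc p q = Q.det • lc i j ᵥ* Q := by
  rw [← vecMul_one (∑ p, ∑ q, _), ← hQ, ← vecMul_vecMul, sum_smul_lc_vecMul_transpose,
    smul_vecMul]

lemma toHall_apply (A : Matrix (Fin 3) (Fin 3) ℝ) (i j : Fin 3) :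
    toHall A i j = lc i j ᵥ* A := rfl

lemma rot_apply (Q : Matrix (Fin 3) (Fin 3) ℝ) (K : Fin 3 → Fin 3 → Fin 3 → ℝ)
    (i j : Fin 3) :
    rot Q K i j = ∑ p, ∑ q, (Q i p * Q j q) • (Q *ᵥ K p q) := by
  ext k
  simp only [rot, Finset.sum_apply, Pi.smul_apply, smul_eq_mul, mulVec, dotProduct,
    Finset.mul_sum, mul_assoc]

/-- Rotating the Hall tensor of `A` gives the Hall tensor of `det Q • Q A Qᵀ`. -/
theorem rot_toHall (A Q : Matrix (Fin 3) (Fin 3) ℝ) (hQ : Qᵀ * Q = 1) :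
    rot Q (toHall A) = toHall (Q.det • (Q * A * Qᵀ)) := by
  funext i j
  calc rot Q (toHall A) i j
      = ∑ p, ∑ q, (Q i p * Q j q) • (lc p q ᵥ* (A * Qᵀ)) := by
        simp only [rot_apply, toHall_apply, ← vecMul_transpose, vecMul_vecMul]
    _ = (∑ p, ∑ q, (Q i p * Q j q) • lc p q) ᵥ* (A * Qᵀ) := by
        simp only [sum_vecMul, smul_vecMul]
    _ = toHall (Q.det • (Q * A * Qᵀ)) i j := by
        rw [sum_smul_lc_eq_det_smul_vecMul Q hQ, toHall_apply, smul_vecMul, vecMul_vecMul,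
          vecMul_smul, Matrix.mul_assoc]
end

section
/- Let g be a function on 3×3 matrices satisfying g(Q A Qᵀ) = g(A) for all orthogonal Q, and suppose g is even, i.e., g(-A) = g(A) for all A. Then the function f defined on Hall tensors by f(K) := g((1/2)εK) satisfies f(⟨Q⟩K) = f(K) for all orthogonal Q; i.e., f is an isotropic invariant of the Hall tensor. -/
open Matrix

/-! The Levi-Civita symbol transforms under any matrix `Q` through its cofactor matrix, which
gives `ε(⟨Q⟩K) = adj(Q)ᵀ (εK) Qᵀ`. For orthogonal `Q` this is `det Q • Q (εK) Qᵀ` with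
`det Q = ±1`, so the orthogonal invariance of `g` handles the conjugation and its evenness
the sign. -/

theorem sum_lc_mul_mul_eq_sum_lc_mul_adjugate (Q : Matrix (Fin 3) (Fin 3) ℝ) (i p q : Fin 3) :
    ∑ k, ∑ l, lc k l i * Q k p * Q l q = ∑ m, lc p q m * Q.adjugate m i := by
  fin_cases i <;> fin_cases p <;> fin_cases q <;>
    · simp only [adjugate_fin_three, Fin.sum_univ_three, of_apply, cons_val', cons_val_zero,
        cons_val_one, cons_val_two, empty_val', cons_val_fin_one, Fin.reduceFinMk]
      norm_num [lc]
      ring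

theorem toMat_rot (Q : Matrix (Fin 3) (Fin 3) ℝ) (K : Fin 3 → Fin 3 → Fin 3 → ℝ) :
    toMat (rot Q K) = Q.adjugateᵀ * toMat K * Qᵀ := by
  ext i j
  calc toMat (rot Q K) i j
      = ∑ p, ∑ q, (∑ k, ∑ l, lc k l i * Q k p * Q l q) * ∑ r, Q j r * K p q r := by
        simp only [toMat, rot, of_apply, Fin.sum_univ_three]
        ring
    _ = ∑ p, ∑ q, (∑ m, lc p q m * Q.adjugate m i) * ∑ r, Q j r * K p q r := by
        simp only [sum_lc_mul_mul_eq_sum_lc_mul_adjugate]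
    _ = (Q.adjugateᵀ * toMat K * Qᵀ) i j := by
        simp only [toMat, mul_apply, transpose_apply, of_apply, Fin.sum_univ_three]
        ring

theorem adjugate_eq_det_smul_transpose {n R : Type*} [Fintype n] [DecidableEq n] [CommRing R]
    {Q : Matrix n n R} (hQ : Qᵀ * Q = 1) : Q.adjugate = Q.det • Qᵀ :=
  calc Q.adjugate = Qᵀ * Q * Q.adjugate := by rw [hQ, one_mul]
    _ = Q.det • Qᵀ := by rw [Matrix.mul_assoc, mul_adjugate, Matrix.mul_smul, mul_one]

theorem det_eq_one_or_neg_one_of_transpose_mul_self {n R : Type*} [Fintype n] [DecidableEq n]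
    [CommRing R] [NoZeroDivisors R] {Q : Matrix n n R} (hQ : Qᵀ * Q = 1) :
    Q.det = 1 ∨ Q.det = -1 := by
  have h := congrArg det hQ
  rw [det_mul, det_transpose, det_one] at h
  exact mul_self_eq_one_iff.mp h

theorem toMat_rot_of_orthogonal {Q : Matrix (Fin 3) (Fin 3) ℝ} (hQ : Qᵀ * Q = 1)
    (K : Fin 3 → Fin 3 → Fin 3 → ℝ) : toMat (rot Q K) = Q.det • (Q * toMat K * Qᵀ) := by
  rw [toMat_rot, adjugate_eq_det_smul_transpose hQ, transpose_smul, transpose_transpose,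
    smul_mul, smul_mul]

theorem apply_det_smul_conj_eq {n : Type*} [Fintype n] [DecidableEq n]
    {g : Matrix n n ℝ → ℝ}
    (hg : ∀ (Q A : Matrix n n ℝ), Qᵀ * Q = 1 → g (Q * A * Qᵀ) = g A)
    (heven : ∀ A, g (-A) = g A) {Q : Matrix n n ℝ} (hQ : Qᵀ * Q = 1) (A : Matrix n n ℝ) :
    g (Q.det • (Q * A * Qᵀ)) = g A := by
  rcases det_eq_one_or_neg_one_of_transpose_mul_self hQ with h | h
  · rw [h, one_smul, hg Q A hQ]
  · rw [h, neg_one_smul, heven, hg Q A hQ]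

/-- An even orthogonally-invariant function of `(1/2)εK` is an isotropic
invariant of the Hall tensor `K`. -/
theorem isotropic_of_even_invariant
    (g : Matrix (Fin 3) (Fin 3) ℝ → ℝ)
    (hg : ∀ (Q A : Matrix (Fin 3) (Fin 3) ℝ), Qᵀ * Q = 1 → g (Q * A * Qᵀ) = g A)
    (heven : ∀ A, g (-A) = g A)
    (f : (Fin 3 → Fin 3 → Fin 3 → ℝ) → ℝ)
    (hf : ∀ K, f K = g ((1/2 : ℝ) • toMat K)) :
    ∀ (Q : Matrix (Fin 3) (Fin 3) ℝ), Qᵀ * Q = 1 →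
      ∀ K : Fin 3 → Fin 3 → Fin 3 → ℝ, (∀ i j k, K i j k = - K j i k) →
        f (rot Q K) = f K := by
  intro Q hQ K _
  have hscale : (1/2 : ℝ) • (Q.det • (Q * toMat K * Qᵀ)) =
      Q.det • (Q * ((1/2 : ℝ) • toMat K) * Qᵀ) := by
    rw [Matrix.mul_smul, Matrix.smul_mul, smul_comm]
  rw [hf, hf, toMat_rot_of_orthogonal hQ, hscale, apply_det_smul_conj_eq hg heven hQ]
end

section
/- There exist two 3×3 real matrices A and A′ such that, with T, W (resp. T′, W′) their symmetric and skew-symmetric parts, all of the invariants tr W², (tr T)², tr(T²W²), (tr T)(tr T³), (tr T)(tr TW²), tr(T²W²TW), (tr T³)², (tr TW²)², (tr T³)(tr TW²) agree for A and A′, but tr T² ≠ tr T′². (For instance, A = diag(k-entries) induced by the Hall tensor with k₁₃₁ = -1, k₂₃₂ = 1 and all other independent components zero, versus k′₁₃₁ = -2, k′₂₃₂ = 2.) -/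
open Matrix

/-!
For a symmetric matrix the skew part vanishes, so every invariant containing `W` is zero.
If moreover `tr T = tr T³ = 0`, the remaining invariants vanish as well. These conditions are
preserved under scaling, whereas `tr T²` scales quadratically: compare `T = diag(1, -1, 0)`
with `2T`.
-/

section Symmetric

variable {A A' : Matrix (Fin 3) (Fin 3) ℝ}

theorem symmPart_eq_self_of_isSymm (hA : A.IsSymm) : symmPart A = A := by
  rw [symmPart, hA.eq, ← two_smul ℝ A, smul_smul]
  norm_num

theorem skewPart_eq_zero_of_isSymm (hA : A.IsSymm) : skewPart A = 0 := by
  rw [skewPart, hA.eq, sub_self, smul_zero]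

theorem invariants_eq_of_isSymm_of_trace_eq_zero (hA : A.IsSymm) (hA' : A'.IsSymm)
    (htr : A.trace = 0) (htr' : A'.trace = 0)
    (htr3 : (A ^ 3).trace = 0) (htr3' : (A' ^ 3).trace = 0) :
    ((skewPart A) ^ 2).trace = ((skewPart A') ^ 2).trace ∧
      ((symmPart A).trace) ^ 2 = ((symmPart A').trace) ^ 2 ∧
      ((symmPart A) ^ 2 * (skewPart A) ^ 2).trace
        = ((symmPart A') ^ 2 * (skewPart A') ^ 2).trace ∧
      (symmPart A).trace * ((symmPart A) ^ 3).trace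
        = (symmPart A').trace * ((symmPart A') ^ 3).trace ∧
      (symmPart A).trace * (symmPart A * (skewPart A) ^ 2).trace
        = (symmPart A').trace * (symmPart A' * (skewPart A') ^ 2).trace ∧
      ((symmPart A) ^ 2 * (skewPart A) ^ 2 * symmPart A * skewPart A).trace
        = ((symmPart A') ^ 2 * (skewPart A') ^ 2 * symmPart A' * skewPart A').trace ∧
      (((symmPart A) ^ 3).trace) ^ 2 = (((symmPart A') ^ 3).trace) ^ 2 ∧
      ((symmPart A * (skewPart A) ^ 2).trace) ^ 2
        = ((symmPart A' * (skewPart A') ^ 2).trace) ^ 2 ∧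
      ((symmPart A) ^ 3).trace * (symmPart A * (skewPart A) ^ 2).trace
        = ((symmPart A') ^ 3).trace * (symmPart A' * (skewPart A') ^ 2).trace := by
  simp only [symmPart_eq_self_of_isSymm hA, symmPart_eq_self_of_isSymm hA',
    skewPart_eq_zero_of_isSymm hA, skewPart_eq_zero_of_isSymm hA', htr, htr', htr3, htr3']
  simp

end Symmetric

/-- There are two 3×3 matrices on which the nine invariants other than `tr T²`
agree while `tr T²` differs: `I₂` is not a function of the other nine. -/
theorem I2_functionally_irreducible :
    ∃ A A' : Matrix (Fin 3) (Fin 3) ℝ,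
      ((skewPart A) ^ 2).trace = ((skewPart A') ^ 2).trace ∧
      ((symmPart A).trace) ^ 2 = ((symmPart A').trace) ^ 2 ∧
      ((symmPart A) ^ 2 * (skewPart A) ^ 2).trace
        = ((symmPart A') ^ 2 * (skewPart A') ^ 2).trace ∧
      (symmPart A).trace * ((symmPart A) ^ 3).trace
        = (symmPart A').trace * ((symmPart A') ^ 3).trace ∧
      (symmPart A).trace * (symmPart A * (skewPart A) ^ 2).trace
        = (symmPart A').trace * (symmPart A' * (skewPart A') ^ 2).trace ∧
      ((symmPart A) ^ 2 * (skewPart A) ^ 2 * symmPart A * skewPart A).trace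
        = ((symmPart A') ^ 2 * (skewPart A') ^ 2 * symmPart A' * skewPart A').trace ∧
      (((symmPart A) ^ 3).trace) ^ 2 = (((symmPart A') ^ 3).trace) ^ 2 ∧
      ((symmPart A * (skewPart A) ^ 2).trace) ^ 2
        = ((symmPart A' * (skewPart A') ^ 2).trace) ^ 2 ∧
      ((symmPart A) ^ 3).trace * (symmPart A * (skewPart A) ^ 2).trace
        = ((symmPart A') ^ 3).trace * (symmPart A' * (skewPart A') ^ 2).trace ∧
      ((symmPart A) ^ 2).trace ≠ ((symmPart A') ^ 2).trace := by
  set D : Matrix (Fin 3) (Fin 3) ℝ := diagonal ![1, -1, 0]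
  have hD : D.IsSymm := isSymm_diagonal _
  have htr : D.trace = 0 := by norm_num [D, trace_diagonal, Fin.sum_univ_succ]
  have htr2 : (D ^ 2).trace = 2 := by
    norm_num [D, diagonal_pow, trace_diagonal, Fin.sum_univ_succ]
  have htr3 : (D ^ 3).trace = 0 := by
    norm_num [D, diagonal_pow, trace_diagonal, Fin.sum_univ_succ]
  have h2D : ((2 : ℝ) • D).IsSymm := hD.smul 2
  obtain ⟨h₁, h₂, h₃, h₄, h₅, h₆, h₇, h₈, h₉⟩ :=
    invariants_eq_of_isSymm_of_trace_eq_zero hD h2D htr (by rw [trace_smul, htr, smul_zero])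
      htr3 (by rw [smul_pow, trace_smul, htr3, smul_zero])
  refine ⟨D, (2 : ℝ) • D, h₁, h₂, h₃, h₄, h₅, h₆, h₇, h₈, h₉, ?_⟩
  rw [symmPart_eq_self_of_isSymm hD, symmPart_eq_self_of_isSymm h2D, smul_pow, trace_smul, htr2]
  norm_num
end

section
/- There exist 3×3 real matrices A and A′ with symmetric parts T, T′ and skew-symmetric parts W, W′ such that tr T² = tr T′², tr W² = tr W′², (tr T)² = (tr T′)², tr(T²W²) = tr(T′²W′²), and all six products among {tr T, tr T³, tr(TW²)} of total degree 4 and 6 except tr(T²W²TW) agree, while tr(T²W²TW) = 2 and tr(T′²W′²T′W′) = -2. In particular, the invariant I₆ = tr(T²W²TW) is not a single-valued function of the other nine invariants I₂, J₂, K₂, I₄, J₄, K₄, J₆, K₆, L₆. -/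
open Matrix

/- Transposing `A` keeps `T` and replaces `W` by `-W`. Every invariant other than `I₆` is even
in `W`, while `I₆` is odd, so `A` and `Aᵀ` agree on the nine invariants and have opposite `I₆`;
it remains to exhibit one `A` with `I₆ = 2`. -/

noncomputable def I₆ (A : Matrix (Fin 3) (Fin 3) ℝ) : ℝ :=
  ((symmPart A) ^ 2 * (skewPart A) ^ 2 * symmPart A * skewPart A).trace

section Transpose

variable (A : Matrix (Fin 3) (Fin 3) ℝ)

theorem symmPart_transpose : symmPart Aᵀ = symmPart A := by
  rw [symmPart, symmPart, transpose_transpose, add_comm]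

theorem skewPart_transpose : skewPart Aᵀ = -skewPart A := by
  rw [skewPart, skewPart, transpose_transpose, ← smul_neg, neg_sub]

theorem I₆_transpose : I₆ Aᵀ = -I₆ A := by
  rw [I₆, I₆, symmPart_transpose, skewPart_transpose, neg_sq, mul_neg, trace_neg]

end Transpose

theorem I₆_witness : I₆ !![-2, -2, 1; 1, -1, -1; 2, 2, -1] = 2 := by
  have hT : symmPart !![-2, -2, 1; 1, -1, -1; 2, 2, -1]
      = !![-2, -1/2, 3/2; -1/2, -1, 1/2; 3/2, 1/2, -1] := by
    ext i j
    fin_cases i <;> fin_cases j <;> norm_num [symmPart]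
  have hW : skewPart !![-2, -2, 1; 1, -1, -1; 2, 2, -1]
      = !![0, -3/2, -1/2; 3/2, 0, -3/2; 1/2, 3/2, 0] := by
    ext i j
    fin_cases i <;> fin_cases j <;> norm_num [skewPart]
  rw [I₆, hT, hW]
  norm_num [sq, mul_fin_three, trace_fin_three, cons_val_two, vecHead, vecTail]

/-- `I₆ = tr(T²W²TW)` is not a single-valued function of the other nine
invariants: two matrices agree on all nine but have `I₆ = 2` and `I₆ = -2`. -/
theorem I6_functionally_irreducible :
    ∃ A A' : Matrix (Fin 3) (Fin 3) ℝ,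
      ((symmPart A) ^ 2).trace = ((symmPart A') ^ 2).trace ∧
      ((skewPart A) ^ 2).trace = ((skewPart A') ^ 2).trace ∧
      ((symmPart A).trace) ^ 2 = ((symmPart A').trace) ^ 2 ∧
      ((symmPart A) ^ 2 * (skewPart A) ^ 2).trace
        = ((symmPart A') ^ 2 * (skewPart A') ^ 2).trace ∧
      (symmPart A).trace * ((symmPart A) ^ 3).trace
        = (symmPart A').trace * ((symmPart A') ^ 3).trace ∧
      (symmPart A).trace * (symmPart A * (skewPart A) ^ 2).trace
        = (symmPart A').trace * (symmPart A' * (skewPart A') ^ 2).trace ∧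
      (((symmPart A) ^ 3).trace) ^ 2 = (((symmPart A') ^ 3).trace) ^ 2 ∧
      ((symmPart A * (skewPart A) ^ 2).trace) ^ 2
        = ((symmPart A' * (skewPart A') ^ 2).trace) ^ 2 ∧
      ((symmPart A) ^ 3).trace * (symmPart A * (skewPart A) ^ 2).trace
        = ((symmPart A') ^ 3).trace * (symmPart A' * (skewPart A') ^ 2).trace ∧
      ((symmPart A) ^ 2 * (skewPart A) ^ 2 * symmPart A * skewPart A).trace = 2 ∧
      ((symmPart A') ^ 2 * (skewPart A') ^ 2 * symmPart A' * skewPart A').trace = -2 := by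
  refine ⟨!![-2, -2, 1; 1, -1, -1; 2, 2, -1], !![-2, -2, 1; 1, -1, -1; 2, 2, -1]ᵀ, ?_⟩
  have hI₆ : I₆ !![-2, -2, 1; 1, -1, -1; 2, 2, -1]ᵀ = -2 := by
    rw [I₆_transpose, I₆_witness]
  refine ⟨?_, ?_, ?_, ?_, ?_, ?_, ?_, ?_, ?_, I₆_witness, hI₆⟩ <;>
    simp only [symmPart_transpose, skewPart_transpose, neg_sq]
end
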